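/- Let f : ℝ → ℂ be a Schwartz function, b ∈ ℝ, and a > 0. Then for every a′ > 0 the principal value defining W₂(a′,b) exists, and the function a′ ↦ W₂(a′,b) is differentiable at a with derivative ∂W₂/∂a (a,b) = −(1/(2π a²))·∫_ℝ f(t)·e^{πi(t−b)/a} dt. -/

import Mathlib

open Real Complex MeasureTheory Filter Set

/-!
Substituting `t = b ± s` folds the principal value into `∫_{s > ε} K_{a'}(s) ds` with the
symmetric kernel `K_{a'}(s) = (φ(s) - φ(-s)) / s`, `φ(u) = f(b + u) e^{πiu/a'}`. Since `φ` is
Lipschitz near `0` and integrable, `K_{a'}` is integrable on `(0, ∞)`, so the limit `ε → 0⁺`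
exists. Differentiating `e^{πiu/a'}` in `a'` brings down a factor `u`, which cancels the
singular `1/s`: the `a'`-derivative of `K_{a'}(s)` is `-(πi/a'²)(φ(s) + φ(-s))`, dominated by
`|f(b + s)| + |f(b - s)|` uniformly for `a'` near `a`, and its integral over `(0, ∞)` unfolds
back to `-(πi/a²) ∫ f(t) e^{πi(t-b)/a} dt`.
-/

open Topology

section Folding

variable {E : Type*} [NormedAddCommGroup E] [NormedSpace ℝ E]

theorem setIntegral_le_abs_sub_eq_integral_Ioi {g : ℝ → E} (b : ℝ) {ε : ℝ} (hε : 0 ≤ ε)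
    (hg : IntegrableOn g {t | ε ≤ |t - b|}) :
    ∫ t in {t | ε ≤ |t - b|}, g t = ∫ s in Ioi ε, (g (b + s) + g (b - s)) := by
  have htrans := measurePreserving_add_left volume b
  have hemb := (MeasurableEquiv.addLeft b).measurableEmbedding
  have hpre : (b + ·) ⁻¹' {t | ε ≤ |t - b|} = Iic (-ε) ∪ Ici ε := by
    ext s
    simp only [mem_preimage, mem_ofPred_eq, add_sub_cancel_left, le_abs, mem_union, mem_Iic,
      mem_Ici, le_neg]
    tauto
  have hψ : IntegrableOn (fun s => g (b + s)) (Iic (-ε) ∪ Ici ε) := by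
    rw [← hpre]
    exact (htrans.integrableOn_comp_preimage hemb).2 hg
  have hψneg : IntegrableOn (fun s => g (b + -s)) (Ioi ε) := by
    refine (((Measure.measurePreserving_neg volume).integrableOn_comp_preimage
      (MeasurableEquiv.neg ℝ).measurableEmbedding).2 (hψ.mono_set subset_union_left)).mono_set ?_
    intro s (hs : ε < s)
    simpa only [mem_preimage, mem_Iic, neg_le_neg_iff] using hs.le
  have hnull : AEDisjoint volume (Iic (-ε)) (Ici ε) := by
    refine measure_mono_null (fun s ⟨(h₁ : s ≤ -ε), (h₂ : ε ≤ s)⟩ => ?_)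
      (Real.volume_singleton (a := 0))
    rw [mem_singleton_iff]
    linarith
  rw [← htrans.setIntegral_preimage_emb hemb, hpre,
    setIntegral_union₀ hnull measurableSet_Ici.nullMeasurableSet
      (hψ.mono_set subset_union_left) (hψ.mono_set subset_union_right),
    integral_Ici_eq_integral_Ioi, ← integral_comp_neg_Ioi, add_comm,
    ← integral_add (hψ.mono_set (Ioi_subset_Ici_self.trans subset_union_right)) hψneg]
  simp only [sub_eq_add_neg]

theorem integral_eq_integral_Ioi_add {g : ℝ → E} (b : ℝ) (hg : Integrable g) :
    ∫ t, g t = ∫ s in Ioi 0, (g (b + s) + g (b - s)) := by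
  simpa using setIntegral_le_abs_sub_eq_integral_Ioi b le_rfl hg.integrableOn

end Folding

theorem MeasureTheory.Integrable.integrableOn_div_sub {h : ℝ → ℂ} (hh : Integrable h) (b : ℝ)
    {ε : ℝ} (hε : 0 < ε) : IntegrableOn (fun t => h t / (t - b)) {t | ε ≤ |t - b|} := by
  refine Integrable.mono' (hh.norm.div_const ε).integrableOn ?_ ?_
  · exact (hh.aemeasurable.div (by fun_prop : Measurable fun t : ℝ => (t : ℂ) - b).aemeasurable
      ).aestronglyMeasurable.restrict
  · filter_upwards [ae_restrict_mem (measurableSet_le measurable_const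
      (measurable_id.sub_const b).abs)] with t (ht : ε ≤ |t - b|)
    rw [norm_div, ← Complex.ofReal_sub, Complex.norm_real, Real.norm_eq_abs]
    exact div_le_div_of_nonneg_left (norm_nonneg _) hε ht

noncomputable def pvKernel (φ : ℝ → ℂ) (s : ℝ) : ℂ := (φ s - φ (-s)) / s

theorem norm_pvKernel_of_pos (φ : ℝ → ℂ) {s : ℝ} (hs : 0 < s) :
    ‖pvKernel φ s‖ = ‖φ s - φ (-s)‖ / s := by
  rw [pvKernel, norm_div, Complex.norm_real, Real.norm_of_nonneg hs.le]

theorem integrableOn_Ioi_pvKernel {φ : ℝ → ℂ} (hφ : LocallyLipschitz φ) (hi : Integrable φ) :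
    IntegrableOn (pvKernel φ) (Ioi 0) := by
  have hmeas : AEStronglyMeasurable (pvKernel φ) := Measurable.aestronglyMeasurable <| by
    have hc := hφ.continuous
    unfold pvKernel
    fun_prop
  obtain ⟨C, hC⟩ := (hφ.locallyLipschitzOn (s := Icc (-1) 1)).exists_lipschitzOnWith_of_compact
    isCompact_Icc
  rw [← Ioc_union_Ioi_eq_Ioi zero_le_one]
  refine IntegrableOn.union ?_ ?_
  · refine Integrable.mono' (integrable_const (2 * (C : ℝ))) hmeas.restrict ?_
    filter_upwards [ae_restrict_mem measurableSet_Ioc] with s ⟨hs₀, hs₁⟩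
    have hlip := hC.norm_sub_le (x := s) (y := -s) ⟨by linarith, hs₁⟩ ⟨by linarith, by linarith⟩
    rw [Real.norm_of_nonneg (by linarith)] at hlip
    rw [norm_pvKernel_of_pos φ hs₀, div_le_iff₀ hs₀]
    linarith
  · refine Integrable.mono' (hi.norm.add hi.norm.comp_neg).integrableOn hmeas.restrict ?_
    filter_upwards [ae_restrict_mem measurableSet_Ioi] with s (hs : 1 < s)
    rw [norm_pvKernel_of_pos φ (by linarith)]
    exact (div_le_self (norm_nonneg _) hs.le).trans (norm_sub_le _ _)

theorem hasDerivAt_pvKernel {Φ : ℝ → ℝ → ℂ} {Ψ : ℝ → ℂ} {x s : ℝ} (hs : s ≠ 0)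
    (hpos : HasDerivAt (fun c => Φ c s) (s * Ψ s) x)
    (hneg : HasDerivAt (fun c => Φ c (-s)) ((-s : ℝ) * Ψ (-s)) x) :
    HasDerivAt (fun c => pvKernel (Φ c) s) (Ψ s + Ψ (-s)) x := by
  have hs' : (s : ℂ) ≠ 0 := by exact_mod_cast hs
  refine ((hpos.sub hneg).div_const (s : ℂ)).congr_deriv ?_
  push_cast
  field_simp
  ring

section Modulation

variable (f : SchwartzMap ℝ ℂ) (b : ℝ)

noncomputable def modulate (a' t : ℝ) : ℂ := f t * Complex.exp (π * I * (t - b) / a')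

theorem norm_modulate (a' t : ℝ) : ‖modulate f b a' t‖ = ‖f t‖ := by
  rw [modulate, norm_mul, show π * I * (t - b) / a' = ((π * (t - b) / a' : ℝ) : ℂ) * I by
    push_cast; ring, Complex.norm_exp_ofReal_mul_I, mul_one]

theorem integrable_modulate (a' : ℝ) : Integrable (modulate f b a') :=
  f.integrable.norm.mono' (by unfold modulate; fun_prop)
    (Eventually.of_forall fun t => (norm_modulate f b a' t).le)

theorem locallyLipschitz_modulate_add (a' : ℝ) :
    LocallyLipschitz fun u => modulate f b a' (b + u) := by
  have hf := f.smooth 1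
  have hc : ContDiff ℝ 1 (fun x : ℝ => (x : ℂ)) := Complex.ofRealCLM.contDiff
  unfold modulate
  exact ContDiff.locallyLipschitz (by fun_prop)

theorem integrableOn_Ioi_pvKernel_modulate (a' : ℝ) :
    IntegrableOn (pvKernel fun u => modulate f b a' (b + u)) (Ioi 0) :=
  integrableOn_Ioi_pvKernel (locallyLipschitz_modulate_add f b a')
    ((integrable_modulate f b a').comp_add_left b)

theorem tendsto_setIntegral_modulate_div_sub (a' : ℝ) :
    Tendsto (fun ε : ℝ => ∫ t in {t : ℝ | ε ≤ |t - b|}, modulate f b a' t / ((t : ℂ) - b))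
      (𝓝[>] 0) (𝓝 (∫ s in Ioi 0, pvKernel (fun u => modulate f b a' (b + u)) s)) := by
  refine ((integrableOn_Ioi_pvKernel_modulate f b a').continuousWithinAt_Ici_primitive_Ioi.mono
    Ioi_subset_Ici_self).tendsto.congr' ?_
  filter_upwards [self_mem_nhdsWithin] with ε (hε : 0 < ε)
  rw [setIntegral_le_abs_sub_eq_integral_Ioi b hε.le
    ((integrable_modulate f b a').integrableOn_div_sub b hε)]
  refine setIntegral_congr_fun measurableSet_Ioi fun s _ => ?_
  rw [pvKernel, ← sub_eq_add_neg, show ((b + s : ℝ) : ℂ) - b = s by push_cast; ring,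
    show ((b - s : ℝ) : ℂ) - b = -s by push_cast; ring]
  ring

theorem hasDerivAt_modulate_add_scale (u : ℝ) {a' : ℝ} (ha' : a' ≠ 0) :
    HasDerivAt (fun c => modulate f b c (b + u))
      (u * (-(π * I / a' ^ 2) * modulate f b a' (b + u))) a' := by
  have hinv : HasDerivAt (fun c : ℝ => ((c : ℂ))⁻¹) (-((a' : ℂ) ^ 2)⁻¹) a' := by
    simpa using (hasDerivAt_inv (by exact_mod_cast ha' : (a' : ℂ) ≠ 0)).comp_ofReal
  have hmod (c : ℝ) :
      modulate f b c (b + u) = f (b + u) * Complex.exp (π * I * u * (c : ℂ)⁻¹) := by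
    simp only [modulate, Complex.ofReal_add, add_sub_cancel_left, div_eq_mul_inv]
  simp only [hmod]
  refine (((hinv.const_mul (π * I * u)).cexp).const_mul (f (b + u))).congr_deriv ?_
  ring

theorem hasDerivAt_integral_pvKernel_modulate {a : ℝ} (ha : 0 < a) :
    HasDerivAt (fun a' => ∫ s in Ioi 0, pvKernel (fun u => modulate f b a' (b + u)) s)
      (-(π * I / a ^ 2) * ∫ t, modulate f b a t) a := by
  set Ψ : ℝ → ℝ → ℂ := fun c u => -(π * I / c ^ 2) * modulate f b c (b + u)
  have hpos : ∀ c ∈ Metric.ball a (a / 2), a / 2 < c := fun c hc => by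
    rw [Metric.mem_ball, Real.dist_eq, abs_lt] at hc
    linarith
  have hΨ : ∀ c ∈ Metric.ball a (a / 2), ∀ u, ‖Ψ c u‖ ≤ π / (a / 2) ^ 2 * ‖f (b + u)‖ := by
    intro c hc u
    have hc' := hpos c hc
    rw [norm_mul, norm_modulate, norm_neg, norm_div, norm_mul, norm_pow, Complex.norm_real,
      Complex.norm_real, Complex.norm_I, mul_one, Real.norm_of_nonneg pi_pos.le,
      Real.norm_eq_abs, sq_abs]
    gcongr
  have hderiv := hasDerivAt_integral_of_dominated_loc_of_deriv_le (μ := volume.restrict (Ioi 0))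
    (F := fun c s => pvKernel (fun u => modulate f b c (b + u)) s)
    (F' := fun c s => Ψ c s + Ψ c (-s)) (x₀ := a)
    (bound := fun s => π / (a / 2) ^ 2 * (‖f (b + s)‖ + ‖f (b - s)‖))
    (Metric.ball_mem_nhds a (half_pos ha)) ?_ ?_ ?_ ?_ ?_ ?_
  · rw [← integral_const_mul, integral_eq_integral_Ioi_add b
      ((integrable_modulate f b a).const_mul _)]
    simpa only [Ψ, sub_eq_add_neg] using hderiv.2
  · exact Eventually.of_forall fun c => (integrableOn_Ioi_pvKernel_modulate f b c).1
  · exact integrableOn_Ioi_pvKernel_modulate f b a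
  · have := f.continuous
    exact Continuous.aestronglyMeasurable (by simp only [Ψ, modulate]; fun_prop)
  · filter_upwards with s c hc
    rw [mul_add, sub_eq_add_neg]
    exact (norm_add_le _ _).trans (add_le_add (hΨ c hc s) (hΨ c hc (-s)))
  · exact (((f.integrable.comp_add_left b).norm.add
      (f.integrable.comp_sub_left b).norm).const_mul _).integrableOn
  · filter_upwards [ae_restrict_mem measurableSet_Ioi] with s (hs : 0 < s) c hc
    have hc0 : c ≠ 0 := ((half_pos ha).trans (hpos c hc)).ne'
    exact hasDerivAt_pvKernel hs.ne' (hasDerivAt_modulate_add_scale f b s hc0)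
      (hasDerivAt_modulate_add_scale f b (-s) hc0)

end Modulation

/-- **Scale derivative of `W₂`.**
For a Schwartz function `f`, `b ∈ ℝ` and `a > 0`: the principal value
`W₂(a′,b) = −(i/(2π²))·PV∫ f(t)·e^{πi(t−b)/a′}/(t−b) dt` exists for every `a′ > 0`,
and `a′ ↦ W₂(a′,b)` is differentiable at `a` with derivative
`−(1/(2π a²))·∫ f(t)·e^{πi(t−b)/a} dt`. -/
theorem hasDerivAt_W2_scale (f : SchwartzMap ℝ ℂ) (b : ℝ) (a : ℝ) (ha : 0 < a) :
    ∃ W₂ : ℝ → ℂ,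
      (∀ a' : ℝ, 0 < a' →
        Tendsto (fun ε : ℝ =>
            -(Complex.I / (2 * (Real.pi : ℂ) ^ 2)) * ∫ t in {t : ℝ | ε ≤ |t - b|},
              f t * Complex.exp (Real.pi * Complex.I * (t - b) / a') / ((t : ℂ) - b))
          (nhdsWithin 0 (Ioi 0)) (nhds (W₂ a'))) ∧
      HasDerivAt W₂
        (-(1 / (2 * (Real.pi : ℂ) * a ^ 2)) *
          ∫ t : ℝ, f t * Complex.exp (Real.pi * Complex.I * (t - b) / a)) a := by
  refine ⟨fun a' => -(I / (2 * (π : ℂ) ^ 2)) *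
      ∫ s in Ioi 0, pvKernel (fun u => modulate f b a' (b + u)) s, fun a' _ => ?_, ?_⟩
  · exact (tendsto_setIntegral_modulate_div_sub f b a').const_mul _
  · refine ((hasDerivAt_integral_pvKernel_modulate f b ha).const_mul _).congr_deriv ?_
    have hπ : (π : ℂ) ≠ 0 := by exact_mod_cast pi_ne_zero
    have ha' : (a : ℂ) ≠ 0 := by exact_mod_cast ha.ne'
    rw [← mul_assoc]
    congr 1
    field_simp
    rw [I_sq]
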